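/- Let n ≥ 2 be an integer and ω ∈ ℂ a primitive n-th root of unity. Set P₁ = ∏_{i=1}^{n−1} Δ(X, ω^i) and P₂ = ∏_{i=1}^{n−1} Δ(ω^i, X) in ℂ[X]. Then there do not exist a nonzero complex number c and natural numbers j, k such that X^j · P₁ = c · X^k · P₂. In particular, P₁ and P₂ do not agree up to multiplication by a unit of the Laurent polynomial ring ℂ[t, t⁻¹]. -/

import Mathlib

open Polynomial

/-- The two-variable Alexander polynomial `Δ` of the paper, written as a
function of two elements of `ℂ[X]` so that the one-variable substitutions
`Δ(X, b)` and `Δ(a, X)` are literal instances. -/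
noncomputable def Delta (x y : ℂ[X]) : ℂ[X] :=
  x^6 + x^5*y - 2*x^5 - x^4*y + x^3*y^2 - 2*x^4 - 3*x^3*y - 2*x^2*y^2
    + x^3 - x^2*y - 2*x*y^2 + x*y + y^2

/-! Each `Δ(X, b)` is monic of degree 6 with constant term `b²`, while each `Δ(a, X)` has
degree at most 2. Hence `P₁` has degree `6(n-1)` and, as `ω ≠ 0`, does not vanish at `0`,
whereas `P₂` has degree at most `2(n-1)`. In `X^j P₁ = c X^k P₂` the factor `X^k` must divide
`X^j` because `P₁(0) ≠ 0`, so comparing degrees gives `deg P₁ ≤ deg P₂`, impossible for `n ≥ 2`. -/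

theorem Polynomial.natDegree_le_of_X_pow_mul_eq {R : Type*} [CommRing R] [IsDomain R]
    {p q : R[X]} {c : R} {j k : ℕ} (hp : p.eval 0 ≠ 0)
    (h : X ^ j * p = C c * (X ^ k * q)) : p.natDegree ≤ q.natDegree := by
  have hp0 : p ≠ 0 := fun h0 => hp (by simp [h0])
  have hkj : k ≤ j := by
    by_contra! hjk
    obtain ⟨d, rfl⟩ := Nat.exists_eq_add_of_lt hjk
    have hcancel : p = C c * (X ^ (d + 1) * q) :=
      mul_left_cancel₀ (pow_ne_zero j X_ne_zero) (by rw [h]; ring)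
    exact hp (by simp [hcancel])
  have hrhs : C c * (X ^ k * q) ≠ 0 := h ▸ mul_ne_zero (pow_ne_zero j X_ne_zero) hp0
  have hc : C c ≠ 0 := left_ne_zero_of_mul hrhs
  have hq : q ≠ 0 := right_ne_zero_of_mul (right_ne_zero_of_mul hrhs)
  have hdeg := congrArg natDegree h
  rw [natDegree_mul (pow_ne_zero j X_ne_zero) hp0, natDegree_mul hc (by simp [hq]),
    natDegree_mul (pow_ne_zero k X_ne_zero) hq, natDegree_C, natDegree_X_pow,
    natDegree_X_pow] at hdeg
  omega

lemma Delta_X_C_monic (b : ℂ) : (Delta X (C b)).Monic := by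
  unfold Delta; monicity!

lemma natDegree_Delta_X_C (b : ℂ) : (Delta X (C b)).natDegree = 6 := by
  unfold Delta; compute_degree!

lemma eval_zero_Delta_X_C (b : ℂ) : (Delta X (C b)).eval 0 = b ^ 2 := by
  simp [Delta]

lemma natDegree_Delta_C_X_le (a : ℂ) : (Delta (C a) X).natDegree ≤ 2 := by
  unfold Delta; compute_degree

section Products

variable {ι : Type*} (s : Finset ι)

lemma natDegree_prod_Delta_X_C (b : ι → ℂ) :
    (∏ i ∈ s, Delta X (C (b i))).natDegree = 6 * s.card := by
  rw [natDegree_prod_of_monic _ _ fun i _ => Delta_X_C_monic (b i)]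
  simp [natDegree_Delta_X_C, mul_comm]

lemma natDegree_prod_Delta_C_X_le (a : ι → ℂ) :
    (∏ i ∈ s, Delta (C (a i)) X).natDegree ≤ 2 * s.card :=
  calc _ ≤ ∑ i ∈ s, (Delta (C (a i)) X).natDegree := natDegree_prod_le _ _
    _ ≤ ∑ _i ∈ s, 2 := Finset.sum_le_sum fun i _ => natDegree_Delta_C_X_le (a i)
    _ = 2 * s.card := by rw [Finset.sum_const, smul_eq_mul, mul_comm]

lemma eval_zero_prod_Delta_X_C (b : ι → ℂ) :
    (∏ i ∈ s, Delta X (C (b i))).eval 0 = ∏ i ∈ s, b i ^ 2 := by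
  simp only [eval_prod, eval_zero_Delta_X_C]

end Products

/-- for `n ≥ 2` and `ω` a primitive `n`-th root of unity, the
polynomials `P₁ = ∏ Δ(X, ω^i)` and `P₂ = ∏ Δ(ω^i, X)` do not agree up to
multiplication by a unit `c·t^{±m}` of the Laurent polynomial ring: there are
no nonzero `c : ℂ` and naturals `j, k` with `X^j · P₁ = c · X^k · P₂`. -/
theorem P1_P2_not_associated (n : ℕ) (hn : 2 ≤ n) (ω : ℂ)
    (hω : IsPrimitiveRoot ω n) :
    ¬ ∃ (c : ℂ) (j k : ℕ), c ≠ 0 ∧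
      X^j * (∏ i ∈ Finset.Icc 1 (n-1), Delta X (C (ω^i)))
        = C c * (X^k * (∏ i ∈ Finset.Icc 1 (n-1), Delta (C (ω^i)) X)) := by
  rintro ⟨c, j, k, -, h⟩
  have hω0 : ω ≠ 0 := hω.ne_zero (by omega)
  have heval : (∏ i ∈ Finset.Icc 1 (n - 1), Delta X (C (ω ^ i))).eval 0 ≠ 0 := by
    rw [eval_zero_prod_Delta_X_C]
    exact Finset.prod_ne_zero_iff.mpr fun i _ => pow_ne_zero 2 (pow_ne_zero i hω0)
  have hdeg := natDegree_le_of_X_pow_mul_eq heval h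
  rw [natDegree_prod_Delta_X_C] at hdeg
  have hdeg₂ := natDegree_prod_Delta_C_X_le (Finset.Icc 1 (n - 1)) (ω ^ ·)
  simp only [Nat.card_Icc] at hdeg hdeg₂
  omega
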